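/- Every Lindelöf first countable Hausdorff space has cardinality at most 2^ℵ₀ (Arhangel'skii's theorem). -/

import Mathlib

/-!
Arhangel'skii's closing-off argument. Fix a countable neighbourhood basis `B x` at every point.
Iterate ω₁ times the operation adding, for each countable set `C` already obtained, its closure
and, for each family of basic sets `B y (n y)`, `y ∈ C`, that fails to cover `X`, one point
outside it. Closures of countable sets have size at most `ℵ₀ ^ ℵ₀` in a first countable Hausdorff
space, so every stage, and the union `T`, has size at most `𝔠 ^ ℵ₀ = 𝔠`. Since ω₁ has uncountable
cofinality, every countable subset of `T` lies in an earlier stage; hence `T` is closed, so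
Lindelöf. If `x ∉ T`, cover `T` by basic sets missing `x`: a countable subcover misses `x`, so a
point outside it was added to `T`, which is absurd.
-/

open Cardinal Ordinal Set Filter Topology

universe u

theorem Set.Countable.exists_forall_lt_of_aleph0_lt_cof {α : Type u} [LinearOrder α]
    (hα : ℵ₀ < Order.cof α) {s : Set α} (hs : s.Countable) : ∃ j, ∀ i ∈ s, i < j := by
  refine not_isCofinal_iff.1 fun hcof => ?_
  exact (hα.trans_le (Order.cof_le hcof)).not_ge hs.le_aleph0

theorem aleph0_lt_cof_toType_omega_one : ℵ₀ < Order.cof (ω₁ : Ordinal.{u}).ToType := by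
  rw [Ordinal.cof_toType, cof_omega_one]
  exact aleph0_lt_aleph_one

theorem Cardinal.mk_iUnion_le_continuum {α ι : Type u} {s : ι → Set α} (hι : #ι ≤ 𝔠)
    (hs : ∀ i, #(s i) ≤ 𝔠) : #(⋃ i, s i) ≤ 𝔠 :=
  (mk_iUnion_le s).trans (mul_le_of_le aleph0_le_continuum hι (ciSup_le' hs))

section ClosingOff

variable {α : Type u} (F : Set α → Set α)

noncomputable def closingOffStage : (ω₁ : Ordinal.{u}).ToType → Set α :=
  WellFoundedLT.fix fun i stage =>
    ⋃ C : {C : Set α // C ⊆ ⋃ j : Iio i, stage j j.2 ∧ #C ≤ ℵ₀}, F C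

theorem closingOffStage_eq (i : (ω₁ : Ordinal.{u}).ToType) :
    closingOffStage F i =
      ⋃ C : {C : Set α // C ⊆ ⋃ j : Iio i, closingOffStage F j ∧ #C ≤ ℵ₀}, F C := by
  rw [closingOffStage, WellFoundedLT.fix_eq]

variable {F}

theorem mk_closingOffStage_le (hF : ∀ C : Set α, C.Countable → #(F C) ≤ 𝔠)
    (i : (ω₁ : Ordinal.{u}).ToType) : #(closingOffStage F i) ≤ 𝔠 := by
  induction i using WellFoundedLT.induction with
  | ind i ih =>
    have hIio : #(Iio i) ≤ ℵ₀ := lt_aleph_one_iff.1 (by simpa using mk_Iio_lt i (by simp))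
    have hprev : #(⋃ j : Iio i, closingOffStage F j) ≤ 𝔠 :=
      mk_iUnion_le_continuum (hIio.trans aleph0_le_continuum) fun j => ih j j.2
    rw [closingOffStage_eq]
    refine mk_iUnion_le_continuum ?_ fun C => hF C (le_aleph0_iff_set_countable.1 C.2.2)
    calc _ ≤ max #(⋃ j : Iio i, closingOffStage F j) ℵ₀ ^ ℵ₀ := mk_bounded_subset_le _ _
      _ ≤ 𝔠 ^ ℵ₀ := power_le_power_right (max_le hprev aleph0_le_continuum)
      _ = 𝔠 := continuum_power_aleph0

theorem exists_mk_le_continuum_forall_countable_subset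
    (hF : ∀ C : Set α, C.Countable → #(F C) ≤ 𝔠) :
    ∃ T : Set α, #T ≤ 𝔠 ∧ ∀ C ⊆ T, C.Countable → F C ⊆ T := by
  refine ⟨⋃ i, closingOffStage F i, mk_iUnion_le_continuum ?_ (mk_closingOffStage_le hF),
    fun C hCT hC => ?_⟩
  · simpa using aleph_one_le_continuum
  choose stage hstage using fun c : C => mem_iUnion.1 (hCT c.2)
  have : Countable C := hC.to_subtype
  obtain ⟨j, hj⟩ := (countable_range stage).exists_forall_lt_of_aleph0_lt_cof
    aleph0_lt_cof_toType_omega_one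
  have hCj : C ⊆ ⋃ k : Iio j, closingOffStage F k := fun c hc =>
    mem_iUnion.2 ⟨⟨stage ⟨c, hc⟩, hj _ (mem_range_self _)⟩, hstage ⟨c, hc⟩⟩
  refine subset_iUnion_of_subset j ?_
  rw [closingOffStage_eq]
  exact subset_iUnion_of_subset ⟨C, hCj, hC.le_aleph0⟩ subset_rfl

end ClosingOff

section Topology

variable {X : Type u} [TopologicalSpace X]

theorem mk_closure_le_pow_aleph0 [FrechetUrysohnSpace X] [T2Space X] (A : Set X) :
    #(closure A) ≤ #A ^ ℵ₀ := by
  choose seq hseq hlim using fun y : closure A => mem_closure_iff_seq_limit.1 y.2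
  have hinj : Function.Injective fun y n => (⟨seq y n, hseq y n⟩ : A) := by
    intro y z hyz
    have hseq_eq : seq y = seq z := funext fun n => congrArg Subtype.val (congrFun hyz n)
    exact Subtype.ext (tendsto_nhds_unique (hlim y) (hseq_eq ▸ hlim z))
  simpa using mk_le_of_injective hinj

theorem Set.Countable.mk_closure_le_continuum [FrechetUrysohnSpace X] [T2Space X] {C : Set X}
    (hC : C.Countable) : #(closure C) ≤ 𝔠 :=
  calc #(closure C) ≤ #C ^ ℵ₀ := mk_closure_le_pow_aleph0 C
    _ ≤ ℵ₀ ^ ℵ₀ := power_le_power_right hC.le_aleph0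
    _ = 𝔠 := aleph0_power_aleph0

theorem isClosed_of_forall_countable_closure_subset [SequentialSpace X] {T : Set X}
    (hT : ∀ C ⊆ T, C.Countable → closure C ⊆ T) : IsClosed T :=
  IsSeqClosed.isClosed fun u _ hu hlim =>
    hT (range u) (range_subset_iff.2 hu) (countable_range u)
      (mem_closure_of_tendsto hlim (Eventually.of_forall fun n => mem_range_self n))

end Topology

section EscapePoints

variable {X : Type u}

def escapePoints (B : X → ℕ → Set X) (C : Set X) : Set X :=
  range fun n : {n : C → ℕ // (⋃ y : C, B y (n y))ᶜ.Nonempty} => n.2.some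

theorem mk_escapePoints_le (B : X → ℕ → Set X) {C : Set X} (hC : C.Countable) :
    #(escapePoints B C) ≤ 𝔠 :=
  calc #(escapePoints B C) ≤ #(C → ℕ) := mk_range_le.trans (mk_subtype_le _)
    _ = ℵ₀ ^ #C := by simp
    _ ≤ ℵ₀ ^ ℵ₀ := power_le_power_left aleph0_ne_zero hC.le_aleph0
    _ = 𝔠 := aleph0_power_aleph0

theorem exists_mem_escapePoints_notMem {B : X → ℕ → Set X} {C : Set X} {n : C → ℕ} {x : X}
    (hx : x ∉ ⋃ y : C, B y (n y)) : ∃ z ∈ escapePoints B C, z ∉ ⋃ y : C, B y (n y) :=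
  have hne : (⋃ y : C, B y (n y))ᶜ.Nonempty := ⟨x, hx⟩
  ⟨hne.some, ⟨⟨n, hne⟩, rfl⟩, hne.some_mem⟩

theorem IsLindelof.eq_univ_of_escapePoints_subset [TopologicalSpace X] [T1Space X]
    {B : X → ℕ → Set X} (hB : ∀ x, (𝓝 x).HasBasis (fun _ => True) (B x)) {T : Set X}
    (hT : IsLindelof T) (hTB : ∀ C ⊆ T, C.Countable → escapePoints B C ⊆ T) : T = Set.univ := by
  refine eq_univ_of_forall fun x => by_contra fun hxT => ?_
  have hsep : ∀ y ∈ T, ∃ k, x ∉ B y k := fun y hy =>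
    let ⟨k, _, hk⟩ := (hB y).mem_iff.1 (compl_singleton_mem_nhds (ne_of_mem_of_not_mem hy hxT))
    ⟨k, fun hx => hk hx rfl⟩
  choose! k hk using hsep
  obtain ⟨C, hC, hCT, hTC⟩ := hT.elim_nhds_subcover (fun y => B y (k y))
    fun y _ => (hB y).mem_of_mem trivial
  have hx : x ∉ ⋃ y : C, B y (k y) := by
    simpa using fun y hy => hk y (hCT y hy)
  obtain ⟨z, hzC, hz⟩ := exists_mem_escapePoints_notMem hx
  exact hz (by simpa using hTC (hTB C hCT hC hzC))

end EscapePoints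

/-- Arhangel'skii: Every Lindelöf first countable Hausdorff space has
cardinality at most 2^ℵ₀. -/
theorem arhangelskii (X : Type*) [TopologicalSpace X] [LindelofSpace X]
    [FirstCountableTopology X] [T2Space X] :
    Cardinal.mk X ≤ Cardinal.continuum := by
  choose B hB using fun x : X => (𝓝 x).exists_antitone_basis
  obtain ⟨T, hTcard, hTclosed⟩ := exists_mk_le_continuum_forall_countable_subset
    (F := fun C => closure C ∪ escapePoints B C) fun C hC => (mk_union_le _ _).trans
      (add_le_of_le aleph0_le_continuum hC.mk_closure_le_continuum (mk_escapePoints_le B hC))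
  have hT : IsClosed T := isClosed_of_forall_countable_closure_subset fun C hCT hC =>
    subset_union_left.trans (hTclosed C hCT hC)
  have hTuniv : T = Set.univ := hT.isLindelof.eq_univ_of_escapePoints_subset (fun x => (hB x).1)
    fun C hCT hC => subset_union_right.trans (hTclosed C hCT hC)
  simpa [hTuniv] using hTcard
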